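/- Let X and Y be irreducible 1-step shifts of finite type over finite alphabets, Z a shift space, and φ : X → Y, ψ : Y → Z 1-block factor codes, with π = ψ ∘ φ. Then for every y ∈ Y there is a block v occurring in y whose φ/ψ-depth satisfies d_{φ/ψ}(v) ≤ d_{φ/ψ}(y). -/

import Mathlib

/- Common definitions: shift spaces over finite alphabets, 1-block factor codes,
   transition classes, class degrees, relative transition classes, relative class
   degrees, routability and depth. -/

open Set

namespace SymbDyn

variable {A B C D : Type*}

/-- The shift map `σ` on bi-infinite sequences. -/
def shift (α : Type*) : (ℤ → α) → (ℤ → α) := fun x i => x (i + 1)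

/-- The map on points induced letterwise by a symbol map (a 1-block code). -/
def sliding (Φ : A → B) : (ℤ → A) → (ℤ → B) := fun x i => Φ (x i)

/-- The block `w` occurs in the point `x` starting at coordinate `n`. -/
def OccursAt (x : ℤ → A) (w : List A) (n : ℤ) : Prop :=
  ∀ i : ℕ, i < w.length → w[i]? = some (x (n + i))

/-- The block `w` occurs somewhere in the point `x`. -/
def OccursInPoint (x : ℤ → A) (w : List A) : Prop := ∃ n : ℤ, OccursAt x w n

/-- The block `w` occurs in (a point of) the subset `X`. -/
def BlockOccursIn (X : Set (ℤ → A)) (w : List A) : Prop := ∃ x ∈ X, OccursInPoint x w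

/-- `X` is a shift space: nonempty, closed (product of discrete topologies) and
shift-invariant. -/
def IsShiftSpace [TopologicalSpace A] (X : Set (ℤ → A)) : Prop :=
  X.Nonempty ∧ IsClosed X ∧ shift A '' X = X

/-- `X` is irreducible: any two blocks of `X` can be connected inside `X`. -/
def IsIrreducibleShift (X : Set (ℤ → A)) : Prop :=
  ∀ u v : List A, BlockOccursIn X u → BlockOccursIn X v →
    ∃ t : List A, BlockOccursIn X (u ++ t ++ v)

/-- `X` is a 1-step shift of finite type: any point all of whose 2-blocks occur
in `X` lies in `X`. -/
def IsOneStepSFT (X : Set (ℤ → A)) : Prop :=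
  ∀ z : ℤ → A, (∀ i : ℤ, BlockOccursIn X [z i, z (i + 1)]) → z ∈ X

/-- `x` is right transitive in `X`: every block of `X` occurs in `x|_[0,∞)`. -/
def RightTransitive (X : Set (ℤ → A)) (x : ℤ → A) : Prop :=
  ∀ w : List A, BlockOccursIn X w → ∃ n : ℤ, 0 ≤ n ∧ OccursAt x w n

/-- `x` is left transitive in `X`: every block of `X` occurs in `x|_(-∞,0]`. -/
def LeftTransitive (X : Set (ℤ → A)) (x : ℤ → A) : Prop :=
  ∀ w : List A, BlockOccursIn X w → ∃ n : ℤ, n + w.length ≤ 1 ∧ OccursAt x w n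

/-- `x` is bi-transitive in `X`. -/
def BiTransitive (X : Set (ℤ → A)) (x : ℤ → A) : Prop :=
  RightTransitive X x ∧ LeftTransitive X x

/-- `x` is recurrent: every block of `x` occurs infinitely often to the right. -/
def Recurrent (x : ℤ → A) : Prop :=
  ∀ w : List A, OccursInPoint x w → ∀ n : ℤ, ∃ m : ℤ, n ≤ m ∧ OccursAt x w m

/-- `xb` is a `(π,m)`-bridge from `x` to `x'` (all living in `X`). -/
def IsBridge (X : Set (ℤ → A)) (π : (ℤ → A) → ℤ → C) (m : ℤ) (x x' xb : ℤ → A) : Prop :=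
  xb ∈ X ∧ (∀ i : ℤ, i ≤ m → xb i = x i) ∧
    (∃ n : ℤ, m < n ∧ ∀ i : ℤ, n ≤ i → xb i = x' i) ∧ π xb = π x

/-- `x →_π x'`: `π x = π x'` and there is a `(π,m)`-bridge from `x` to `x'`
for every `m`. -/
def TransTo (X : Set (ℤ → A)) (π : (ℤ → A) → ℤ → C) (x x' : ℤ → A) : Prop :=
  π x = π x' ∧ ∀ m : ℤ, ∃ xb, IsBridge X π m x x' xb

/-- `x ∼_π x'`. -/
def TransEquiv (X : Set (ℤ → A)) (π : (ℤ → A) → ℤ → C) (x x' : ℤ → A) : Prop :=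
  TransTo X π x x' ∧ TransTo X π x' x

/-- The `π`-transition class `[x]_π` of `x` inside `X`. -/
def transClass (X : Set (ℤ → A)) (π : (ℤ → A) → ℤ → C) (x : ℤ → A) : Set (ℤ → A) :=
  {x' | x' ∈ X ∧ TransEquiv X π x x'}

/-- The number `d_π(z)` of `π`-transition classes over the point `z`. -/
noncomputable def ptDeg (X : Set (ℤ → A)) (π : (ℤ → A) → ℤ → C) (z : ℤ → C) : ℕ∞ :=
  {S : Set (ℤ → A) | ∃ x ∈ X, π x = z ∧ S = transClass X π x}.encard

/-- The class degree `d_π = min_{z ∈ Z} d_π(z)`. -/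
noncomputable def classDeg (X : Set (ℤ → A)) (Z : Set (ℤ → C)) (π : (ℤ → A) → ℤ → C) : ℕ∞ :=
  ⨅ z ∈ Z, ptDeg X π z

/-- `xb` is a `(φ/ψ,m)`-bridge from `x` to `x'` relative to `ψ` (whose transition
relation lives on `Y`). -/
def IsRelBridge (X : Set (ℤ → A)) (Y : Set (ℤ → B)) (φ : (ℤ → A) → ℤ → B)
    (ψ : (ℤ → B) → ℤ → C) (m : ℤ) (x x' xb : ℤ → A) : Prop :=
  xb ∈ X ∧ (∀ i : ℤ, i ≤ m → xb i = x i) ∧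
    (∃ n : ℤ, m < n ∧ ∀ i : ℤ, n ≤ i → xb i = x' i) ∧ TransEquiv Y ψ (φ xb) (φ x)

/-- `x →_{φ/ψ} x'`. -/
def RelTransTo (X : Set (ℤ → A)) (Y : Set (ℤ → B)) (φ : (ℤ → A) → ℤ → B)
    (ψ : (ℤ → B) → ℤ → C) (x x' : ℤ → A) : Prop :=
  TransEquiv Y ψ (φ x) (φ x') ∧ ∀ m : ℤ, ∃ xb, IsRelBridge X Y φ ψ m x x' xb

/-- `x ∼_{φ/ψ} x'`. -/
def RelTransEquiv (X : Set (ℤ → A)) (Y : Set (ℤ → B)) (φ : (ℤ → A) → ℤ → B)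
    (ψ : (ℤ → B) → ℤ → C) (x x' : ℤ → A) : Prop :=
  RelTransTo X Y φ ψ x x' ∧ RelTransTo X Y φ ψ x' x

/-- The `φ/ψ`-transition class `[x]_{φ/ψ}` of `x`. -/
def relClass (X : Set (ℤ → A)) (Y : Set (ℤ → B)) (φ : (ℤ → A) → ℤ → B)
    (ψ : (ℤ → B) → ℤ → C) (x : ℤ → A) : Set (ℤ → A) :=
  {x' | x' ∈ X ∧ RelTransEquiv X Y φ ψ x x'}

/-- The number `d_{φ/ψ}(y)` of `φ/ψ`-transition classes over `y`. -/
noncomputable def relPtDeg (X : Set (ℤ → A)) (Y : Set (ℤ → B)) (φ : (ℤ → A) → ℤ → B)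
    (ψ : (ℤ → B) → ℤ → C) (y : ℤ → B) : ℕ∞ :=
  {S : Set (ℤ → A) | ∃ x ∈ X, φ x = y ∧ S = relClass X Y φ ψ x}.encard

/-- The class degree `d_{φ/ψ} = min_{y ∈ Y} d_{φ/ψ}(y)` of `φ` relative to `ψ`. -/
noncomputable def relClassDeg (X : Set (ℤ → A)) (Y : Set (ℤ → B)) (φ : (ℤ → A) → ℤ → B)
    (ψ : (ℤ → B) → ℤ → C) : ℕ∞ :=
  ⨅ y ∈ Y, relPtDeg X Y φ ψ y

/-- The block `x|_{[s, s+l-1]}`. -/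
def segment (x : ℤ → A) (s : ℤ) (l : ℕ) : List A := (List.range l).map fun i => x (s + i)

/-- The block `u` (of the same length as `w`) is routable through the symbol `a`
at coordinate `n` (coordinates start at 1) with respect to the 1-block code
induced by `Θ`, over the target block `w`. -/
def RoutableThru (X : Set (ℤ → A)) (Θ : A → C) (w : List C) (n : ℕ) (a : A)
    (u : List A) : Prop :=
  ∃ v : List A, BlockOccursIn X v ∧ v.length = u.length ∧ v.map Θ = w ∧
    v[0]? = u[0]? ∧ v[v.length - 1]? = u[u.length - 1]? ∧
    v[n - 1]? = some a

/-- `u` is `φ/ψ`-routable through `a` at `n` over the block `w` of `Y`. -/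
def RelRoutable (X : Set (ℤ → A)) (Φ : A → B) (Ψ : B → C) (w : List B) (n : ℕ) (a : A)
    (u : List A) : Prop :=
  RoutableThru X (Ψ ∘ Φ) (w.map Ψ) n a u

/-- The block `w` of `Y` is `φ/ψ`-presented through `M` at `n`. -/
def RelPresented (X : Set (ℤ → A)) (Φ : A → B) (Ψ : B → C) (w : List B) (n : ℕ)
    (M : Set A) : Prop :=
  ∀ u : List A, BlockOccursIn X u → u.map Φ = w → ∃ a ∈ M, RelRoutable X Φ Ψ w n a u

/-- The `φ/ψ`-depth `d_{φ/ψ}(w)` of a block `w`. -/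
noncomputable def relDepth (X : Set (ℤ → A)) (Φ : A → B) (Ψ : B → C) (w : List B) : ℕ∞ :=
  sInf {k : ℕ∞ | ∃ n : ℕ, 1 ≤ n ∧ n ≤ w.length ∧
    ∃ M : Finset A, RelPresented X Φ Ψ w n ↑M ∧ k = (M.card : ℕ∞)}

end SymbDyn

namespace SymbDyn

/-!
Fix `y` with finitely many `φ/ψ`-classes over it, and a representative of each. A point `z'` of
the fiber over `y` can be rerouted, without changing its image under `ψ ∘ φ`, through the
representative of the class of a point `z` close to `z'`: leave `z'` at coordinate `0` along a
bridge from `z` to its representative, pass through the representative at a coordinate `c`, and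
come back along a bridge to `z`, which rejoins `z'` by a coordinate `K`. There are finitely many
pairs (class, symbol at `0`), so `c` can be chosen uniformly; the fiber is compact, so `K` can be
too. Because `X` is a 1-step SFT, only the symbols at the seams matter. A second compactness
argument shows that a point of `X` lying over `y` on a long enough window `[-k, k]` agrees at `0`
and `K` with a point of the fiber; splicing in the rerouted fiber point routes every block over
`v = y|[-k, k]` through a symbol some representative carries at `c`.
-/

section Development

open Filter Topology

variable {A B C : Type*}

section Blocks

lemma segment_eq_map_range (x : ℤ → A) (s : ℤ) (l : ℕ) :
    segment x s l = (List.range l).map fun i : ℕ => x (s + i) := by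
  simp [segment, ← List.map_eq_flatMap]

lemma segment_length (x : ℤ → A) (s : ℤ) (l : ℕ) : (segment x s l).length = l := by
  simp [segment_eq_map_range]

lemma segment_getElem? (x : ℤ → A) (s : ℤ) {l i : ℕ} (hi : i < l) :
    (segment x s l)[i]? = some (x (s + i)) := by
  simp [segment_eq_map_range, hi]

lemma occursAt_segment (x : ℤ → A) (s : ℤ) (l : ℕ) : OccursAt x (segment x s l) s :=
  fun _ hi => segment_getElem? x s (by rwa [segment_length] at hi)

lemma segment_map (f : A → B) (x : ℤ → A) (s : ℤ) (l : ℕ) :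
    (segment x s l).map f = segment (f ∘ x) s l := by
  simp [segment_eq_map_range]

lemma segment_congr {x x' : ℤ → A} {s : ℤ} {l : ℕ}
    (h : ∀ i, s ≤ i → i < s + l → x i = x' i) : segment x s l = segment x' s l := by
  simp only [segment_eq_map_range, List.map_inj_left, List.mem_range]
  exact fun i hi => h _ (by omega) (by omega)

lemma apply_eq_of_segment_eq {x x' : ℤ → A} {s : ℤ} {l : ℕ}
    (h : segment x s l = segment x' s l) {i : ℤ} (h₁ : s ≤ i) (h₂ : i < s + l) : x i = x' i := by
  have := congrArg (·[(i - s).toNat]?) h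
  simp only [segment_getElem? _ _ (show (i - s).toNat < l by omega)] at this
  rwa [show s + ((i - s).toNat : ℤ) = i by omega, Option.some_inj] at this

lemma comp_add_mem {X : Set (ℤ → A)} (hX : shift A '' X = X) {x : ℤ → A} (hx : x ∈ X) (j : ℤ) :
    (fun i => x (i + j)) ∈ X := by
  induction j using Int.induction_on with
  | zero => simpa using hx
  | succ j ih =>
    rw [← hX]
    exact ⟨_, ih, by funext i; simp only [shift]; ring_nf⟩
  | pred j ih =>
    rw [← hX] at ih
    obtain ⟨w, hw, hsw⟩ := ih
    convert hw using 1
    funext i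
    simpa [shift, sub_eq_add_neg, add_comm, add_left_comm] using (congrFun hsw (i - 1)).symm

lemma exists_mem_segment_eq {X : Set (ℤ → A)} (hX : shift A '' X = X) {u : List A}
    (hu : BlockOccursIn X u) (s : ℤ) : ∃ x ∈ X, segment x s u.length = u := by
  obtain ⟨x, hx, t, ht⟩ := hu
  refine ⟨fun i => x (i + (t - s)), comp_add_mem hX hx _, List.ext_getElem? fun i => ?_⟩
  rcases lt_or_ge i u.length with hi | hi
  · rw [segment_getElem? _ _ hi, ht i hi]
    congr 2
    ring
  · simp [segment_length, hi]

lemma routableThru_segment {X : Set (ℤ → A)} {Θ : A → C} {ζ : ℤ → C} {w x : ℤ → A} (hw : w ∈ X)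
    {s : ℤ} {l n : ℕ} (hn : 1 ≤ n) (hnl : n ≤ l) (hs : w s = x s)
    (he : w (s + l - 1) = x (s + l - 1)) (hΘ : ∀ i, s ≤ i → i < s + l → Θ (w i) = ζ i) :
    RoutableThru X Θ (segment ζ s l) n (w (s + n - 1)) (segment x s l) := by
  refine ⟨segment w s l, ⟨w, hw, s, occursAt_segment w s l⟩, by simp only [segment_length],
    by rw [segment_map]; exact segment_congr hΘ, ?_, ?_, ?_⟩
  · rw [segment_getElem? _ _ (by omega : 0 < l), segment_getElem? _ _ (by omega : 0 < l)]
    simpa using hs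
  · simp only [segment_length]
    rw [segment_getElem? _ _ (by omega : l - 1 < l), segment_getElem? _ _ (by omega : l - 1 < l),
      show s + ((l - 1 : ℕ) : ℤ) = s + l - 1 by omega, he]
  · rw [segment_getElem? _ _ (by omega : n - 1 < l),
      show s + ((n - 1 : ℕ) : ℤ) = s + n - 1 by omega]

lemma relDepth_segment_le {X : Set (ℤ → A)} (hX : shift A '' X = X) {Φ : A → B} {Ψ : B → C}
    {y : ℤ → B} {s : ℤ} {l n : ℕ} (hn : 1 ≤ n) (hnl : n ≤ l) {M : Finset A}
    (h : ∀ x ∈ X, (∀ i, s ≤ i → i < s + l → Φ (x i) = y i) → ∃ w ∈ X, w s = x s ∧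
      w (s + l - 1) = x (s + l - 1) ∧ w (s + n - 1) ∈ M ∧
      ∀ i, s ≤ i → i < s + l → Ψ (Φ (w i)) = Ψ (y i)) :
    relDepth X Φ Ψ (segment y s l) ≤ M.card := by
  refine sInf_le ⟨n, hn, by rwa [segment_length], M, fun u hu hΦu => ?_, rfl⟩
  have hl : u.length = l := by rw [← List.length_map Φ, hΦu, segment_length]
  obtain ⟨x, hx, rfl⟩ := hl ▸ exists_mem_segment_eq hX hu s
  rw [segment_map] at hΦu
  obtain ⟨w, hw, hs, he, hM, hΨ⟩ := h x hx fun i h₁ h₂ => apply_eq_of_segment_eq hΦu h₁ h₂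
  refine ⟨_, hM, ?_⟩
  rw [RelRoutable, segment_map]
  exact routableThru_segment hw hn hnl hs he hΨ

end Blocks

section Glue

def glue (c : ℤ) (p q : ℤ → A) : ℤ → A := fun i => if i ≤ c then p i else q i

variable {c i : ℤ} {p q : ℤ → A}

lemma glue_of_le (h : i ≤ c) : glue c p q i = p i := if_pos h

lemma glue_of_ge (hpq : p c = q c) (h : c ≤ i) : glue c p q i = q i := by
  unfold glue
  split_ifs with h'
  · rwa [le_antisymm h' h]
  · rfl

lemma glue_self : glue c p p = p := funext fun _ => ite_self _

lemma sliding_glue (Θ : A → B) : sliding Θ (glue c p q) = glue c (sliding Θ p) (sliding Θ q) :=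
  funext fun _ => apply_ite Θ _ _ _

def GlueClosed (G : Set (ℤ → A)) : Prop :=
  ∀ c, ∀ p ∈ G, ∀ q ∈ G, p c = q c → glue c p q ∈ G

lemma blockOccursIn_pair {X : Set (ℤ → A)} {x : ℤ → A} (hx : x ∈ X) (i : ℤ) :
    BlockOccursIn X [x i, x (i + 1)] := by
  refine ⟨x, hx, i, fun j hj => ?_⟩
  match j, hj with
  | 0, _ => simp
  | 1, _ => simp

lemma IsOneStepSFT.glueClosed {X : Set (ℤ → A)} (hX : IsOneStepSFT X) : GlueClosed X := by
  intro c p hp q hq hpq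
  refine hX _ fun i => ?_
  rcases lt_or_ge i c with h | h
  · rw [glue_of_le h.le, glue_of_le (by omega)]
    exact blockOccursIn_pair hp i
  · rw [glue_of_ge hpq h, glue_of_ge hpq (by omega)]
    exact blockOccursIn_pair hq i

def fiber (X : Set (ℤ → A)) (Θ : A → B) (y : ℤ → B) : Set (ℤ → A) :=
  {x | x ∈ X ∧ sliding Θ x = y}

lemma fiber_subset_fiber_comp (X : Set (ℤ → A)) (Φ : A → B) (Ψ : B → C) (y : ℤ → B) :
    fiber X Φ y ⊆ fiber X (Ψ ∘ Φ) (sliding Ψ y) :=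
  fun _ hz => ⟨hz.1, by rw [← hz.2]; rfl⟩

lemma GlueClosed.fiber {X : Set (ℤ → A)} (hX : GlueClosed X) (Θ : A → B) (y : ℤ → B) :
    GlueClosed (fiber X Θ y) := by
  rintro c p ⟨hp, rfl⟩ q ⟨hq, hpq'⟩ hpq
  exact ⟨hX c p hp q hq hpq, by rw [sliding_glue, hpq', glue_self]⟩

lemma GlueClosed.exists_splice {X : Set (ℤ → A)} (hX : GlueClosed X) {x g : ℤ → A} (hx : x ∈ X)
    (hg : g ∈ X) {a b : ℤ} (hab : a ≤ b) (ha : g a = x a) (hb : g b = x b) :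
    ∃ w ∈ X, (∀ i, a ≤ i → i ≤ b → w i = g i) ∧ ∀ i, i ≤ a ∨ b ≤ i → w i = x i := by
  have hgx : glue b g x ∈ X := hX b g hg x hx hb
  have hseam : x a = glue b g x a := by rw [glue_of_le hab, ha]
  refine ⟨glue a x (glue b g x), hX a x hx _ hgx hseam, fun i h₁ h₂ => ?_, fun i hi => ?_⟩
  · rw [glue_of_ge hseam h₁, glue_of_le h₂]
  · rcases hi with hi | hi
    · exact glue_of_le hi
    · rw [glue_of_ge hseam (hab.trans hi), glue_of_ge hb hi]

end Glue

section Topology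

variable [TopologicalSpace A] [DiscreteTopology A]

lemma isClosed_setOf_forall_apply (P : ℤ → A → Prop) : IsClosed {x : ℤ → A | ∀ i, P i (x i)} := by
  convert isClosed_iInter fun i => (isClosed_discrete {a | P i a}).preimage (continuous_apply i)
  ext
  simp

lemma isClosed_fiber {X : Set (ℤ → A)} (hX : IsClosed X) (Θ : A → B) (y : ℤ → B) :
    IsClosed (fiber X Θ y) := by
  have : {x : ℤ → A | sliding Θ x = y} = {x | ∀ i, Θ (x i) = y i} := Set.ext fun _ => funext_iff
  have h := isClosed_setOf_forall_apply fun i a => Θ a = y i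
  rw [← this] at h
  exact hX.inter h

lemma eventually_apply_eq (z : ℤ → A) (i : ℤ) : ∀ᶠ w in 𝓝 z, w i = z i :=
  (continuous_apply i).continuousAt.eventually_mem ((isOpen_discrete {z i}).mem_nhds rfl)

lemma eventually_exists_mem_fiber_of_window [Finite A] {X : Set (ℤ → A)} (hX : IsClosed X)
    (Φ : A → B) (y : ℤ → B) (p q : ℤ) :
    ∀ᶠ k : ℕ in atTop, ∀ x ∈ X, (∀ i : ℤ, -k ≤ i → i ≤ k → Φ (x i) = y i) →
      ∃ z ∈ fiber X Φ y, z p = x p ∧ z q = x q := by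
  set V := (fun x : ℤ → A => (x p, x q)) ⁻¹' ((fun z : ℤ → A => (z p, z q)) '' fiber X Φ y)
  set t : ℕ → Set (ℤ → A) := fun k => {x | ∀ i : ℤ, -k ≤ i → i ≤ k → Φ (x i) = y i}
  have hV : IsOpen V :=
    (isOpen_discrete _).preimage ((continuous_apply p).prodMk (continuous_apply q))
  have ht : Antitone t := fun k k' hk x hx i h₁ h₂ => hx i (by omega) (by omega)
  have hempty : (X \ V) ∩ ⋂ k, t k = ∅ := by
    refine eq_empty_iff_forall_notMem.2 fun x ⟨⟨hx, hxV⟩, hxt⟩ => hxV ⟨x, ⟨hx, ?_⟩, rfl⟩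
    exact funext fun i => mem_iInter.1 hxt i.natAbs i (by omega) (by omega)
  obtain ⟨k, hk⟩ := (hX.isCompact.diff hV).elim_directed_family_closed t
    (fun k => isClosed_setOf_forall_apply fun i a => -(k : ℤ) ≤ i → i ≤ k → Φ a = y i) hempty
    ht.directed_ge
  filter_upwards [eventually_ge_atTop k] with k' hk' x hx hxy
  have hxV : x ∈ V :=
    by_contra fun hxV => eq_empty_iff_forall_notMem.1 hk x ⟨⟨hx, hxV⟩, ht hk' hxy⟩
  obtain ⟨z, hz, hzx⟩ := hxV
  exact ⟨z, hz, Prod.mk.inj hzx⟩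

end Topology

section Routing

/-- A weak bridge from `p` to `q` inside `G`: once `G` is closed under gluing, only the two
seam coordinates of a bridge matter. -/
def Reaches (G : Set (ℤ → A)) (p q : ℤ → A) : Prop :=
  ∀ m : ℤ, ∀ᶠ n : ℕ in atTop, ∃ b ∈ G, b m = p m ∧ b n = q n

variable {G F : Set (ℤ → A)} {ρ : (ℤ → A) → ℤ → A}

lemma eventually_uniform_bridge [Finite A] (hρ : (ρ '' F).Finite)
    (hto : ∀ z ∈ F, Reaches G z (ρ z)) :
    ∀ᶠ c : ℕ in atTop, ∀ z ∈ F, ∃ b ∈ G, b 0 = z 0 ∧ b c = ρ z c := by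
  have hP : ((fun z => (ρ z, z 0)) '' F).Finite :=
    (hρ.prod finite_univ).subset <| by
      rintro _ ⟨z, hz, rfl⟩
      exact ⟨mem_image_of_mem ρ hz, mem_univ _⟩
  have := (eventually_all_finite hP (p := fun r (c : ℕ) => ∃ b ∈ G, b 0 = r.2 ∧ b c = r.1 c)).2
    (by rintro _ ⟨z, hz, rfl⟩; exact hto z hz 0)
  filter_upwards [this] with c hc z hz using hc _ ⟨z, hz, rfl⟩

variable [TopologicalSpace A] [DiscreteTopology A]

lemma eventually_forall_route (hG : GlueClosed G) (hFG : F ⊆ G) (hF : IsCompact F) {c : ℕ}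
    (hleft : ∀ z ∈ F, ∃ b ∈ G, b 0 = z 0 ∧ b c = ρ z c) (hfrom : ∀ z ∈ F, Reaches G (ρ z) z) :
    ∀ᶠ K : ℕ in atTop, ∀ z' ∈ F, ∃ g ∈ G, g 0 = z' 0 ∧ g K = z' K ∧ ∃ z ∈ F, g c = ρ z c := by
  suffices h : ∀ z ∈ F, ∀ᶠ p : ℕ × (ℤ → A) in atTop ×ˢ 𝓝 z, p.2 ∈ F →
      ∃ g ∈ G, g 0 = p.2 0 ∧ g p.1 = p.2 p.1 ∧ ∃ z ∈ F, g c = ρ z c from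
    (Eventually.curry (hF.mem_prod_nhdsSet_of_forall h)).mono fun _ hK z' hz' =>
      hK.self_of_nhdsSet z' hz' hz'
  intro z hz
  obtain ⟨b, hbG, hb0, hbc⟩ := hleft z hz
  obtain ⟨r, ⟨b', hb'G, hb'c, hb'r⟩, hcr⟩ := ((hfrom z hz c).and (eventually_ge_atTop c)).exists
  refine ((eventually_ge_atTop r).prod_mk ((eventually_apply_eq z 0).and
    (eventually_apply_eq z r))).mono ?_
  rintro ⟨K, z'⟩ ⟨hrK, hz'0, hz'r⟩ (hz' : z' ∈ F)
  dsimp only at hrK hz'0 hz'r ⊢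
  have hRseam : b' r = z' r := hb'r.trans hz'r.symm
  have hLseam : b c = glue r b' z' c := by rw [glue_of_le (by omega), hbc, hb'c]
  have hgseam : z' 0 = glue c b (glue r b' z') 0 := by rw [glue_of_le (by omega), hb0, ← hz'0]
  have hLG := hG c b hbG _ (hG r b' hb'G z' (hFG hz') hRseam) hLseam
  refine ⟨_, hG 0 z' (hFG hz') _ hLG hgseam, glue_of_le le_rfl, ?_, z, hz, ?_⟩
  · rw [glue_of_ge hgseam (by omega), glue_of_ge hLseam (by omega), glue_of_ge hRseam (by omega)]
  · rw [glue_of_ge hgseam (by omega), glue_of_le le_rfl, hbc]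

theorem exists_route [Finite A] (hG : GlueClosed G) (hFG : F ⊆ G) (hF : IsCompact F)
    (hρ : (ρ '' F).Finite) (hto : ∀ z ∈ F, Reaches G z (ρ z))
    (hfrom : ∀ z ∈ F, Reaches G (ρ z) z) :
    ∃ c K : ℕ, c ≤ K ∧ ∀ z' ∈ F, ∃ g ∈ G, g 0 = z' 0 ∧ g K = z' K ∧ ∃ z ∈ F, g c = ρ z c := by
  obtain ⟨c, hc⟩ := (eventually_uniform_bridge hρ hto).exists
  obtain ⟨K, hK, hcK⟩ :=
    ((eventually_forall_route hG hFG hF hc hfrom).and (eventually_ge_atTop c)).exists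
  exact ⟨c, K, hcK, hK⟩

end Routing

section Relative

variable {X : Set (ℤ → A)} {Y : Set (ℤ → B)}

lemma transEquiv_refl (ψ : (ℤ → B) → ℤ → C) {w : ℤ → B} (hw : w ∈ Y) : TransEquiv Y ψ w w :=
  have h : TransTo Y ψ w w :=
    ⟨rfl, fun m => ⟨w, hw, fun _ _ => rfl, ⟨m + 1, by omega, fun _ _ => rfl⟩, rfl⟩⟩
  ⟨h, h⟩

lemma mem_relClass_self (φ : (ℤ → A) → ℤ → B) (ψ : (ℤ → B) → ℤ → C) {x : ℤ → A} (hx : x ∈ X)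
    (hxY : φ x ∈ Y) : x ∈ relClass X Y φ ψ x :=
  have h : RelTransTo X Y φ ψ x x := ⟨transEquiv_refl ψ hxY,
    fun m => ⟨x, hx, fun _ _ => rfl, ⟨m + 1, by omega, fun _ _ => rfl⟩, transEquiv_refl ψ hxY⟩⟩
  ⟨hx, h, h⟩

lemma RelTransTo.reaches {Φ : A → B} {Ψ : B → C} {x x' : ℤ → A}
    (h : RelTransTo X Y (sliding Φ) (sliding Ψ) x x') :
    Reaches (fiber X (Ψ ∘ Φ) (sliding Ψ (sliding Φ x))) x x' := by
  intro m
  obtain ⟨b, hb, hbx, ⟨n, -, hbx'⟩, hbψ⟩ := h.2 m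
  filter_upwards [eventually_ge_atTop n.toNat] with n' hn'
  exact ⟨b, ⟨hb, hbψ.1.1⟩, hbx m le_rfl, hbx' n' (by omega)⟩

lemma relPtDeg_eq_encard_image (Φ : A → B) (ψ : (ℤ → B) → ℤ → C) (y : ℤ → B) :
    relPtDeg X Y (sliding Φ) ψ y = (relClass X Y (sliding Φ) ψ '' fiber X Φ y).encard := by
  unfold relPtDeg fiber
  congr 1
  ext S
  simp [eq_comm, and_assoc]

lemma exists_section_encard_image_le {α β : Type*} [Nonempty α] (F : Set α) (κ : α → β) :
    ∃ ρ : α → α, (∀ z ∈ F, ρ z ∈ F ∧ κ (ρ z) = κ z) ∧ (ρ '' F).encard ≤ (κ '' F).encard :=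
  ⟨Function.invFunOn κ F ∘ κ, fun z hz => ⟨Function.invFunOn_mem ⟨z, hz, rfl⟩,
    Function.invFunOn_eq ⟨z, hz, rfl⟩⟩, by rw [image_comp]; exact encard_image_le _ _⟩

variable [Finite A] [TopologicalSpace A] [DiscreteTopology A] {Φ : A → B} {Ψ : B → C} {y : ℤ → B}

theorem exists_route_fiber (hXne : X.Nonempty) (hXc : IsClosed X) (hXsft : IsOneStepSFT X)
    (hφ : ∀ x ∈ X, sliding Φ x ∈ Y) (hy : relPtDeg X Y (sliding Φ) (sliding Ψ) y ≠ ⊤) :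
    ∃ c K : ℕ, c ≤ K ∧ ∃ M : Finset A, (M.card : ℕ∞) ≤ relPtDeg X Y (sliding Φ) (sliding Ψ) y ∧
      ∀ z ∈ fiber X Φ y, ∃ g ∈ fiber X (Ψ ∘ Φ) (sliding Ψ y), g 0 = z 0 ∧ g K = z K ∧ g c ∈ M := by
  obtain ⟨x₀, -⟩ := hXne
  have : Nonempty (ℤ → A) := ⟨x₀⟩
  obtain ⟨ρ, hρ, hρcard⟩ :=
    exists_section_encard_image_le (fiber X Φ y) (relClass X Y (sliding Φ) (sliding Ψ))
  rw [← relPtDeg_eq_encard_image] at hρcard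
  have hρfin : (ρ '' fiber X Φ y).Finite := encard_lt_top_iff.1 (hρcard.trans_lt hy.lt_top)
  have hequiv : ∀ z ∈ fiber X Φ y, RelTransEquiv X Y (sliding Φ) (sliding Ψ) z (ρ z) := by
    intro z hz
    have := mem_relClass_self (sliding Φ) (sliding Ψ) (hρ z hz).1.1 (hφ _ (hρ z hz).1.1)
    rw [(hρ z hz).2] at this
    exact this.2
  have hto : ∀ z ∈ fiber X Φ y, Reaches (fiber X (Ψ ∘ Φ) (sliding Ψ y)) z (ρ z) := by
    intro z hz
    simpa only [hz.2] using (hequiv z hz).1.reaches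
  have hfrom : ∀ z ∈ fiber X Φ y, Reaches (fiber X (Ψ ∘ Φ) (sliding Ψ y)) (ρ z) z := by
    intro z hz
    simpa only [(hρ z hz).1.2] using (hequiv z hz).2.reaches
  obtain ⟨c, K, hcK, hroute⟩ := exists_route (hXsft.glueClosed.fiber _ _)
    (fiber_subset_fiber_comp X Φ Ψ y) (isClosed_fiber hXc Φ y).isCompact hρfin hto hfrom
  refine ⟨c, K, hcK, (hρfin.image (· c)).toFinset, ?_, fun z hz => ?_⟩
  · rw [← Finite.encard_eq_coe_toFinset_card]
    exact (encard_image_le _ _).trans hρcard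
  · obtain ⟨g, hg, hg0, hgK, w, hw, hgc⟩ := hroute z hz
    exact ⟨g, hg, hg0, hgK, by simpa using ⟨w, hw, hgc.symm⟩⟩

theorem exists_block_relDepth_le_card (hX : IsShiftSpace X) (hXsft : IsOneStepSFT X) {c K : ℕ}
    (hcK : c ≤ K) {M : Finset A} (hroute : ∀ z ∈ fiber X Φ y,
      ∃ g ∈ fiber X (Ψ ∘ Φ) (sliding Ψ y), g 0 = z 0 ∧ g K = z K ∧ g c ∈ M) :
    ∃ v : List B, OccursInPoint y v ∧ relDepth X Φ Ψ v ≤ M.card := by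
  obtain ⟨k, hwin, hKk⟩ :=
    ((eventually_exists_mem_fiber_of_window hX.2.1 Φ y 0 K).and (eventually_ge_atTop K)).exists
  refine ⟨segment y (-k) (2 * k + 1), ⟨_, occursAt_segment _ _ _⟩,
    relDepth_segment_le hX.2.2 (n := c + k + 1) (by omega) (by omega) fun x hx hxy => ?_⟩
  obtain ⟨z, hz, hz0, hzK⟩ := hwin x hx fun i h₁ h₂ => hxy i h₁ (by omega)
  obtain ⟨g, ⟨hgX, hgy⟩, hg0, hgK, hgc⟩ := hroute z hz
  obtain ⟨w, hwX, hwg, hwx⟩ := hXsft.glueClosed.exists_splice hx hgX (Nat.cast_nonneg K)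
    (hg0.trans hz0) (hgK.trans hzK)
  refine ⟨w, hwX, hwx _ (Or.inl (by omega)), hwx _ (Or.inr (by omega)), ?_, fun i h₁ h₂ => ?_⟩
  · rwa [show -(k : ℤ) + ((c + k + 1 : ℕ) : ℤ) - 1 = c by omega, hwg c (by omega) (by omega)]
  · by_cases hi : 0 ≤ i ∧ i ≤ K
    · rw [hwg i hi.1 hi.2]
      exact congrFun hgy i
    · rw [hwx i (by omega), hxy i h₁ h₂]

end Relative

end Development

theorem exists_block_relDepth_le_general
    {A B C : Type*} [Fintype A]
    [TopologicalSpace A] [DiscreteTopology A]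
    (X : Set (ℤ → A)) (Y : Set (ℤ → B))
    (hX : IsShiftSpace X) (hXsft : IsOneStepSFT X)
    (Φ : A → B) (Ψ : B → C)
    (hφ : sliding Φ '' X = Y)
    (y : ℤ → B) :
    ∃ v : List B, OccursInPoint y v ∧
      relDepth X Φ Ψ v ≤ relPtDeg X Y (sliding Φ) (sliding Ψ) y := by
  rcases eq_or_ne (relPtDeg X Y (sliding Φ) (sliding Ψ) y) ⊤ with htop | htop
  · exact ⟨[], ⟨0, fun i hi => absurd hi (Nat.not_lt_zero i)⟩, htop ▸ le_top⟩
  obtain ⟨c, K, hcK, M, hM, hroute⟩ := exists_route_fiber hX.1 hX.2.1 hXsft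
    (fun x hx => hφ ▸ mem_image_of_mem _ hx) htop
  obtain ⟨v, hv, hvM⟩ := exists_block_relDepth_le_card hX hXsft hcK hroute
  exact ⟨v, hv, hvM.trans hM⟩

theorem exists_block_relDepth_le
    {A B C : Type*} [Fintype A] [Fintype B] [Fintype C]
    [TopologicalSpace A] [DiscreteTopology A]
    [TopologicalSpace B] [DiscreteTopology B]
    [TopologicalSpace C] [DiscreteTopology C]
    (X : Set (ℤ → A)) (Y : Set (ℤ → B)) (Z : Set (ℤ → C))
    (hX : IsShiftSpace X) (hXirr : IsIrreducibleShift X) (hXsft : IsOneStepSFT X)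
    (hY : IsShiftSpace Y) (hYirr : IsIrreducibleShift Y) (hYsft : IsOneStepSFT Y)
    (hZ : IsShiftSpace Z)
    (Φ : A → B) (Ψ : B → C)
    (hφ : sliding Φ '' X = Y) (hψ : sliding Ψ '' Y = Z)
    (y : ℤ → B) (hy : y ∈ Y) :
    ∃ v : List B, OccursInPoint y v ∧
      relDepth X Φ Ψ v ≤ relPtDeg X Y (sliding Φ) (sliding Ψ) y :=
  exists_block_relDepth_le_general X Y hX hXsft Φ Ψ hφ y

end SymbDyn
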